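/- Let Z be a set of T distinct datapoints, W ⊆ ℝ^d closed convex, f: W × Z → ℝ with each f(·;z) G-Lipschitz and β-smooth, and F(w) := (1/T)∑_{z∈Z} f(w;z) λ-strongly convex; set κ := β/λ. Consider SGD on a random order sequence z_1,…,z_T ∼ 𝒵(T): w_{t+1} = Π_W(w_t − η_t ∇f(w_t; z_t)) with step sizes η_t = min{ λ/(2β²), 4/(λt) } and any w_1 ∈ W. Then for all m ≤ T/(2κ), SGD is on-average-oos stable with rate ε_stab(m) ≤ 8G/(λm); i.e., for every i ≤ m, E ‖w_{m+1} − w^{(i)}_{m+1}‖ ≤ 8G/(λm), where w^{(i)}_{m+1} is the iterate produced by running the same SGD on the sequence with z_i replaced by z_{m+1}. -/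

import Mathlib

/-- `F` is `μ`-strongly convex on `W` (via its gradient). -/
def StrongConvexOnSet {d : ℕ} (W : Set (EuclideanSpace ℝ (Fin d))) (μ : ℝ)
    (F : EuclideanSpace ℝ (Fin d) → ℝ) : Prop :=
  ∀ x ∈ W, ∀ y ∈ W,
    F x + (inner ℝ (gradient F x) (y - x) : ℝ) + μ / 2 * ‖y - x‖ ^ 2 ≤ F y

/-- `gdIter proj f η zs w1 m` is the iterate `w_{m+1}` obtained by `m` projected gradient
steps `w_{t+1} = Π(w_t - η_t ∇f(w_t; z_t))` on the datapoint sequence `zs`, from `w1`. -/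
noncomputable def gdIter {d : ℕ} {Z : Type*}
    (proj : EuclideanSpace ℝ (Fin d) → EuclideanSpace ℝ (Fin d))
    (f : EuclideanSpace ℝ (Fin d) → Z → ℝ) (η : ℕ → ℝ) (zs : ℕ → Z)
    (w1 : EuclideanSpace ℝ (Fin d)) : ℕ → EuclideanSpace ℝ (Fin d)
  | 0 => w1
  | t + 1 => proj (gdIter proj f η zs w1 t
      - η (t + 1) • gradient (fun u => f u (zs (t + 1))) (gdIter proj f η zs w1 t))

/-- `ordSeq hT σ t` is the `t`-th datapoint `z_t = σ(t)` of the random-order sequence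
induced by the permutation `σ` (rounds are 1-indexed). -/
def ordSeq {T : ℕ} (hT : 0 < T) (σ : Equiv.Perm (Fin T)) : ℕ → Fin T :=
  fun t => σ ⟨(t - 1) % T, Nat.mod_lt _ hT⟩

/-!
Run both chains on the same permutation `σ`. They agree before round `i`, and after round `i`
they are at distance at most `2Gη_i`, since the projection is nonexpansive and the gradients
are bounded by `G`. From then on both chains read the same datapoint `σ(t)` at round `t + 1`,
while their iterates at time `t` depend on `σ` only through the `t + 1` positions
`0, …, t - 1, m`. Exchangeability of the random order therefore lets us replace `σ(t)` by the
average over the `T - t - 1` datapoints at the other positions. Since `(t + 1)β ≤ Tλ/2`, the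
gradient differences of these losses still sum to at least `(T - t - 1)(λ/2)‖x - y‖²` against
`x - y`, and with `η ≤ λ/(2β²)` one step contracts the expected distance by `1 - ηλ/4`.
As `η_tλ/4 = min(λ²/(8β²), 1/t)`, these contractions keep the expected distance at time `t`
below `(8G/λ) min(λ²/(8β²), 1/t)`.
-/

open Finset InnerProductSpace

section Projection

variable {F : Type*} [NormedAddCommGroup F] [InnerProductSpace ℝ F] {K : Set F} {proj : F → F}

lemma inner_sub_proj_le_zero (hK : Convex ℝ K)
    (hproj : ∀ x, proj x ∈ K ∧ ∀ w ∈ K, ‖x - proj x‖ ≤ ‖x - w‖) (x : F) {w : F} (hw : w ∈ K) :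
    ⟪x - proj x, w - proj x⟫_ℝ ≤ 0 := by
  have : Nonempty K := ⟨⟨proj x, (hproj x).1⟩⟩
  have hinf : ‖x - proj x‖ = ⨅ w : K, ‖x - w‖ :=
    le_antisymm (le_ciInf fun w => (hproj x).2 w w.2)
      (ciInf_le ⟨0, by rintro _ ⟨w, rfl⟩; positivity⟩ (⟨proj x, (hproj x).1⟩ : K))
  exact (norm_eq_iInf_iff_real_inner_le_zero hK (hproj x).1).1 hinf w hw

lemma norm_proj_sub_proj_le (hK : Convex ℝ K)
    (hproj : ∀ x, proj x ∈ K ∧ ∀ w ∈ K, ‖x - proj x‖ ≤ ‖x - w‖) (a b : F) :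
    ‖proj a - proj b‖ ≤ ‖a - b‖ := by
  have ha := inner_sub_proj_le_zero hK hproj a (hproj b).1
  have hb := inner_sub_proj_le_zero hK hproj b (hproj a).1
  have hsplit : ⟪a - b, proj a - proj b⟫_ℝ = ‖proj a - proj b‖ ^ 2
      - ⟪a - proj a, proj b - proj a⟫_ℝ - ⟪b - proj b, proj a - proj b⟫_ℝ := by
    rw [← real_inner_self_eq_norm_sq]
    simp only [inner_sub_left, inner_sub_right, real_inner_comm]
    ring
  have hsq : ‖proj a - proj b‖ * ‖proj a - proj b‖ ≤ ‖a - b‖ * ‖proj a - proj b‖ := by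
    nlinarith [real_inner_le_norm (a - b) (proj a - proj b)]
  rcases (norm_nonneg (proj a - proj b)).eq_or_lt with h0 | h0
  · rw [← h0]; exact norm_nonneg _
  · exact le_of_mul_le_mul_right hsq h0

end Projection

lemma StrongConvexOnSet.mul_sq_le_inner_gradient_sub {d : ℕ} {W : Set (EuclideanSpace ℝ (Fin d))}
    {μ : ℝ} {F : EuclideanSpace ℝ (Fin d) → ℝ} (hF : StrongConvexOnSet W μ F)
    {x y : EuclideanSpace ℝ (Fin d)} (hx : x ∈ W) (hy : y ∈ W) :
    μ * ‖x - y‖ ^ 2 ≤ ⟪gradient F x - gradient F y, x - y⟫_ℝ := by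
  have hxy := hF x hx y hy
  have hyx := hF y hy x hx
  rw [← neg_sub x y, inner_neg_right, norm_neg] at hxy
  rw [inner_sub_left]
  linarith

lemma gradient_const_mul_sum {E ι : Type*} [NormedAddCommGroup E] [InnerProductSpace ℝ E]
    [CompleteSpace E] {f : E → ι → ℝ} (hf : ∀ z, Differentiable ℝ (fun w => f w z))
    (c : ℝ) (s : Finset ι) (x : E) :
    gradient (fun w => c * ∑ z ∈ s, f w z) x = c • ∑ z ∈ s, gradient (fun w => f w z) x := by
  have h : HasFDerivAt (fun w => c * ∑ z ∈ s, f w z)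
      (c • ∑ z ∈ s, fderiv ℝ (fun w => f w z) x) x :=
    (HasFDerivAt.fun_sum fun z _ => (hf z x).hasFDerivAt).const_mul c
  rw [gradient, h.fderiv, map_smul, map_sum]
  rfl

lemma sum_le_card_mul_of_sum_sq_le {ι : Type*} {s : Finset ι} {a : ι → ℝ} {c : ℝ} (hc : 0 ≤ c)
    (h : ∑ j ∈ s, a j ^ 2 ≤ #s * c ^ 2) : ∑ j ∈ s, a j ≤ #s * c := by
  refine le_of_sq_le_sq ?_ (by positivity)
  calc (∑ j ∈ s, a j) ^ 2 ≤ #s * ∑ j ∈ s, a j ^ 2 := sq_sum_le_card_mul_sum_sq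
    _ ≤ #s * (#s * c ^ 2) := by gcongr
    _ = (#s * c) ^ 2 := by ring

lemma sum_norm_sub_smul_le {E ι : Type*} [NormedAddCommGroup E] [InnerProductSpace ℝ E]
    {K : Finset ι} {u : E} {g : ι → E} {β μ η : ℝ} (hg : ∀ j ∈ K, ‖g j‖ ≤ β * ‖u‖)
    (hcoer : #K * (μ / 2) * ‖u‖ ^ 2 ≤ ∑ j ∈ K, ⟪g j, u⟫_ℝ)
    (hη : 0 ≤ η) (hηβ : η * β ^ 2 ≤ μ / 2) (hημ : η * μ ≤ 4) :
    ∑ j ∈ K, ‖u - η • g j‖ ≤ #K * ((1 - η * μ / 4) * ‖u‖) := by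
  refine sum_le_card_mul_of_sum_sq_le (mul_nonneg (by linarith) (norm_nonneg _)) ?_
  have hsq : ∀ j ∈ K, ‖u - η • g j‖ ^ 2 ≤ ‖u‖ ^ 2 - 2 * η * ⟪g j, u⟫_ℝ + η * (μ / 2) * ‖u‖ ^ 2 := by
    intro j hj
    have hgj : ‖g j‖ ^ 2 ≤ β ^ 2 * ‖u‖ ^ 2 := by
      rw [← mul_pow]; exact pow_le_pow_left₀ (norm_nonneg _) (hg j hj) 2
    rw [norm_sub_sq_real, real_inner_smul_right, norm_smul, Real.norm_of_nonneg hη,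
      real_inner_comm]
    have hstep : (η * ‖g j‖) ^ 2 ≤ η * (μ / 2) * ‖u‖ ^ 2 :=
      calc (η * ‖g j‖) ^ 2 ≤ η * (η * β ^ 2) * ‖u‖ ^ 2 := by nlinarith [sq_nonneg η]
        _ ≤ η * (μ / 2) * ‖u‖ ^ 2 := by gcongr
    linarith
  calc ∑ j ∈ K, ‖u - η • g j‖ ^ 2
      ≤ ∑ j ∈ K, (‖u‖ ^ 2 - 2 * η * ⟪g j, u⟫_ℝ + η * (μ / 2) * ‖u‖ ^ 2) := sum_le_sum hsq
    _ = #K * ((1 + η * μ / 2) * ‖u‖ ^ 2) - 2 * η * ∑ j ∈ K, ⟪g j, u⟫_ℝ := by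
      rw [sum_add_distrib, sum_sub_distrib, ← mul_sum, sum_const, sum_const, nsmul_eq_mul,
        nsmul_eq_mul]
      ring
    _ ≤ #K * ((1 - η * μ / 2) * ‖u‖ ^ 2) := by nlinarith [mul_le_mul_of_nonneg_left hcoer hη]
    _ ≤ #K * ((1 - η * μ / 4) * ‖u‖) ^ 2 := by
      rw [mul_pow]
      gcongr
      nlinarith [sq_nonneg (η * μ)]

lemma mul_sq_le_sum_inner_gradient_sub {d T : ℕ} {W : Set (EuclideanSpace ℝ (Fin d))}
    {f : EuclideanSpace ℝ (Fin d) → Fin T → ℝ} {μ : ℝ}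
    (hdiff : ∀ z, Differentiable ℝ (fun w => f w z))
    (hstrong : StrongConvexOnSet W μ (fun w => (1 / T : ℝ) * ∑ z : Fin T, f w z))
    {x y : EuclideanSpace ℝ (Fin d)} (hx : x ∈ W) (hy : y ∈ W) :
    T * μ * ‖x - y‖ ^ 2
      ≤ ∑ j, ⟪gradient (fun u => f u j) x - gradient (fun u => f u j) y, x - y⟫_ℝ := by
  rcases T.eq_zero_or_pos with rfl | hT
  · simp
  have h := hstrong.mul_sq_le_inner_gradient_sub hx hy
  rw [gradient_const_mul_sum hdiff, gradient_const_mul_sum hdiff, ← smul_sub,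
    real_inner_smul_left, ← sum_sub_distrib, sum_inner, one_div,
    le_inv_mul_iff₀ (by exact_mod_cast hT)] at h
  linarith

lemma sum_compl_norm_sub_smul_gradient_sub_le {d T : ℕ} {W : Set (EuclideanSpace ℝ (Fin d))}
    {f : EuclideanSpace ℝ (Fin d) → Fin T → ℝ} {β μ η : ℝ}
    (hdiff : ∀ z, Differentiable ℝ (fun w => f w z))
    (hsmooth : ∀ z, ∀ x ∈ W, ∀ y ∈ W,
      ‖gradient (fun u => f u z) x - gradient (fun u => f u z) y‖ ≤ β * ‖x - y‖)
    (hstrong : StrongConvexOnSet W μ (fun w => (1 / T : ℝ) * ∑ z : Fin T, f w z)) (hμ : 0 ≤ μ)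
    {x y : EuclideanSpace ℝ (Fin d)} (hx : x ∈ W) (hy : y ∈ W)
    (U : Finset (Fin T)) (hU : #U * β ≤ T * μ / 2)
    (hη : 0 ≤ η) (hηβ : η * β ^ 2 ≤ μ / 2) (hημ : η * μ ≤ 4) :
    ∑ j ∈ Uᶜ, ‖(x - y) - η • (gradient (fun u => f u j) x - gradient (fun u => f u j) y)‖
      ≤ #Uᶜ * ((1 - η * μ / 4) * ‖x - y‖) := by
  set g := fun j => gradient (fun u => f u j) x - gradient (fun u => f u j) y
  have hg : ∀ j, ‖g j‖ ≤ β * ‖x - y‖ := fun j => hsmooth j x hx y hy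
  have hinner : ∀ j ∈ U, ⟪g j, x - y⟫_ℝ ≤ β * ‖x - y‖ ^ 2 := fun j _ =>
    (real_inner_le_norm _ _).trans (by nlinarith [hg j, norm_nonneg (x - y)])
  have htotal : T * μ * ‖x - y‖ ^ 2 ≤ ∑ j, ⟪g j, x - y⟫_ℝ :=
    mul_sq_le_sum_inner_gradient_sub hdiff hstrong hx hy
  have hcard : (#Uᶜ : ℝ) ≤ T := by exact_mod_cast (card_le_univ Uᶜ).trans_eq (Fintype.card_fin T)
  have hcoer : #Uᶜ * (μ / 2) * ‖x - y‖ ^ 2 ≤ ∑ j ∈ Uᶜ, ⟪g j, x - y⟫_ℝ := by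
    have hsplit := sum_compl_add_sum U (fun j => ⟪g j, x - y⟫_ℝ)
    have hUsum := sum_le_card_nsmul U _ _ hinner
    rw [nsmul_eq_mul] at hUsum
    nlinarith [mul_le_mul_of_nonneg_right hU (sq_nonneg ‖x - y‖),
      mul_le_mul_of_nonneg_right hcard (by positivity : 0 ≤ μ / 2 * ‖x - y‖ ^ 2)]
  exact sum_norm_sub_smul_le (fun j _ => hg j) hcoer hη hηβ hημ

section Exchangeability

open Equiv

variable {α M : Type*} [Fintype α] [DecidableEq α] [AddCommMonoid M]

lemma sum_perm_apply_eq_of_notMem {A : Finset α} {p q : α} (hp : p ∉ A) (hq : q ∉ A)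
    (F : Perm α → α → M) (hF : ∀ σ τ : Perm α, (∀ a ∈ A, σ a = τ a) → F σ = F τ) :
    ∑ σ : Perm α, F σ (σ q) = ∑ σ : Perm α, F σ (σ p) := by
  rw [← Equiv.sum_comp (Equiv.mulRight (swap p q))]
  refine sum_congr rfl fun σ _ => ?_
  have hagree : ∀ a ∈ A, (σ * swap p q) a = σ a := fun a ha => by
    rw [Perm.mul_apply, swap_apply_of_ne_of_ne (ne_of_mem_of_not_mem ha hp)
      (ne_of_mem_of_not_mem ha hq)]
  simp [hF _ _ hagree]

lemma sum_perm_sum_compl_image (A : Finset α) {p : α} (hp : p ∉ A)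
    (F : Perm α → α → M) (hF : ∀ σ τ : Perm α, (∀ a ∈ A, σ a = τ a) → F σ = F τ) :
    ∑ σ : Perm α, ∑ j ∈ (A.image σ)ᶜ, F σ j = #Aᶜ • ∑ σ : Perm α, F σ (σ p) := by
  have hreindex : ∀ σ : Perm α, ∑ j ∈ (A.image σ)ᶜ, F σ j = ∑ q ∈ Aᶜ, F σ (σ q) := fun σ =>
    (sum_equiv σ (fun q => by simp) (fun q _ => rfl)).symm
  simp_rw [hreindex]
  rw [sum_comm, ← sum_const]
  exact sum_congr rfl fun q hq => sum_perm_apply_eq_of_notMem hp (mem_compl.1 hq) F hF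

end Exchangeability

section Iterates

variable {d : ℕ} {Z : Type*} {proj : EuclideanSpace ℝ (Fin d) → EuclideanSpace ℝ (Fin d)}
  {f : EuclideanSpace ℝ (Fin d) → Z → ℝ} {η : ℕ → ℝ} {w1 : EuclideanSpace ℝ (Fin d)}

lemma gdIter_mem {W : Set (EuclideanSpace ℝ (Fin d))} (hproj : ∀ x, proj x ∈ W) (hw1 : w1 ∈ W)
    (zs : ℕ → Z) : ∀ k, gdIter proj f η zs w1 k ∈ W
  | 0 => hw1
  | _ + 1 => hproj _

lemma gdIter_congr {zs zs' : ℕ → Z} {k : ℕ} (h : ∀ s, 1 ≤ s → s ≤ k → zs s = zs' s) :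
    gdIter proj f η zs w1 k = gdIter proj f η zs' w1 k := by
  induction k with
  | zero => rfl
  | succ k ih =>
    simp only [gdIter, ih fun s h1 h2 => h s h1 (by omega), h (k + 1) (by omega) le_rfl]

lemma norm_gdIter_succ_sub_le_of_eq (hnonexp : ∀ a b, ‖proj a - proj b‖ ≤ ‖a - b‖)
    {zs zs' : ℕ → Z} {k : ℕ} (h : zs (k + 1) = zs' (k + 1)) :
    ‖gdIter proj f η zs w1 (k + 1) - gdIter proj f η zs' w1 (k + 1)‖
      ≤ ‖(gdIter proj f η zs w1 k - gdIter proj f η zs' w1 k)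
          - η (k + 1) • (gradient (fun u => f u (zs (k + 1))) (gdIter proj f η zs w1 k)
            - gradient (fun u => f u (zs (k + 1))) (gdIter proj f η zs' w1 k))‖ :=
  (hnonexp _ _).trans_eq (by rw [h, smul_sub]; congr 1; abel)

lemma norm_gdIter_succ_sub_le_of_eqOn {W : Set (EuclideanSpace ℝ (Fin d))} {G : ℝ}
    (hproj : ∀ x, proj x ∈ W) (hnonexp : ∀ a b, ‖proj a - proj b‖ ≤ ‖a - b‖) (hw1 : w1 ∈ W)
    (hLip : ∀ z, ∀ w ∈ W, ‖gradient (fun u => f u z) w‖ ≤ G)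
    {zs zs' : ℕ → Z} {k : ℕ} (hη : 0 ≤ η (k + 1)) (h : ∀ s, 1 ≤ s → s ≤ k → zs s = zs' s) :
    ‖gdIter proj f η zs w1 (k + 1) - gdIter proj f η zs' w1 (k + 1)‖ ≤ 2 * G * η (k + 1) := by
  set x := gdIter proj f η zs w1 k
  set g := gradient (fun u => f u (zs (k + 1))) x
  set g' := gradient (fun u => f u (zs' (k + 1))) x
  have hsame : x = gdIter proj f η zs' w1 k := gdIter_congr h
  calc ‖gdIter proj f η zs w1 (k + 1) - gdIter proj f η zs' w1 (k + 1)‖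
      ≤ ‖(x - η (k + 1) • g) - (x - η (k + 1) • g')‖ := by
        rw [show gdIter proj f η zs' w1 (k + 1) = proj (x - η (k + 1) • g') by rw [gdIter, ← hsame]]
        exact hnonexp _ _
    _ = η (k + 1) * ‖g' - g‖ := by
        rw [sub_sub_sub_cancel_left, ← smul_sub, norm_smul, Real.norm_of_nonneg hη]
    _ ≤ η (k + 1) * (G + G) := by
        have hx : x ∈ W := gdIter_mem hproj hw1 zs k
        gcongr
        exact norm_sub_le_of_le (hLip _ x hx) (hLip _ x hx)
    _ = 2 * G * η (k + 1) := by ring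

end Iterates

/-- The sequence `z_1, …, z_{i-1}, z_{m+1}, z_{i+1}, …` of the coupled iterate `w^{(i)}`. -/
def coupledSeq {T m : ℕ} (hmT : m < T) (i : ℕ) (σ : Equiv.Perm (Fin T)) : ℕ → Fin T :=
  fun t => if t = i then σ ⟨m, hmT⟩ else ordSeq (Nat.zero_lt_of_lt hmT) σ t

section RandomOrder

variable {d T m : ℕ} {proj : EuclideanSpace ℝ (Fin d) → EuclideanSpace ℝ (Fin d)}
  {f : EuclideanSpace ℝ (Fin d) → Fin T → ℝ} {η : ℕ → ℝ} {w1 : EuclideanSpace ℝ (Fin d)}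

lemma ordSeq_of_le (hT : 0 < T) (σ : Equiv.Perm (Fin T)) {s : ℕ} (hs : 1 ≤ s) (hsT : s ≤ T) :
    ordSeq hT σ s = σ ⟨s - 1, by omega⟩ := by
  simp only [ordSeq, Nat.mod_eq_of_lt (show s - 1 < T by omega)]

lemma gdIter_ordSeq_coupledSeq_congr (hmT : m < T) (i : ℕ) {σ τ : Equiv.Perm (Fin T)} {t : ℕ}
    (htT : t ≤ T) (h : ∀ a : Fin T, (a.val < t ∨ a.val = m) → σ a = τ a) :
    gdIter proj f η (ordSeq (Nat.zero_lt_of_lt hmT) σ) w1 t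
        = gdIter proj f η (ordSeq (Nat.zero_lt_of_lt hmT) τ) w1 t ∧
      gdIter proj f η (coupledSeq hmT i σ) w1 t = gdIter proj f η (coupledSeq hmT i τ) w1 t := by
  have hord : ∀ s, 1 ≤ s → s ≤ t →
      ordSeq (Nat.zero_lt_of_lt hmT) σ s = ordSeq (Nat.zero_lt_of_lt hmT) τ s := fun s h1 h2 => by
    rw [ordSeq_of_le _ _ h1 (h2.trans htT), ordSeq_of_le _ _ h1 (h2.trans htT)]
    exact h _ (Or.inl (by simp only; omega))
  refine ⟨gdIter_congr hord, gdIter_congr fun s h1 h2 => ?_⟩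
  simp only [coupledSeq]
  split_ifs
  exacts [h _ (Or.inr rfl), hord s h1 h2]

lemma sum_norm_gdIter_coupledSeq_succ_le {W : Set (EuclideanSpace ℝ (Fin d))} {β μ : ℝ}
    (hmT : m < T) {i t : ℕ} (hti : t + 1 ≠ i) (htm : t < m)
    (hproj : ∀ x, proj x ∈ W) (hnonexp : ∀ a b, ‖proj a - proj b‖ ≤ ‖a - b‖) (hw1 : w1 ∈ W)
    (hdiff : ∀ z, Differentiable ℝ (fun w => f w z))
    (hsmooth : ∀ z, ∀ x ∈ W, ∀ y ∈ W,
      ‖gradient (fun u => f u z) x - gradient (fun u => f u z) y‖ ≤ β * ‖x - y‖)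
    (hstrong : StrongConvexOnSet W μ (fun w => (1 / T : ℝ) * ∑ z : Fin T, f w z)) (hμ : 0 ≤ μ)
    (hcard : (t + 1) * β ≤ T * μ / 2)
    (hη : 0 ≤ η (t + 1)) (hηβ : η (t + 1) * β ^ 2 ≤ μ / 2) (hημ : η (t + 1) * μ ≤ 4) :
    ∑ σ : Equiv.Perm (Fin T), ‖gdIter proj f η (ordSeq (Nat.zero_lt_of_lt hmT) σ) w1 (t + 1)
        - gdIter proj f η (coupledSeq hmT i σ) w1 (t + 1)‖
      ≤ (1 - η (t + 1) * μ / 4) * ∑ σ : Equiv.Perm (Fin T),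
        ‖gdIter proj f η (ordSeq (Nat.zero_lt_of_lt hmT) σ) w1 t
          - gdIter proj f η (coupledSeq hmT i σ) w1 t‖ := by
  set X := fun σ => gdIter proj f η (ordSeq (Nat.zero_lt_of_lt hmT) σ) w1
  set Y := fun σ => gdIter proj f η (coupledSeq hmT i σ) w1
  have htT : t < T := htm.trans hmT
  set p : Fin T := ⟨t, htT⟩
  -- the iterates at time `t` only see the positions in `A`, and step `t + 1` reads position `p`
  set A : Finset (Fin T) := insert ⟨m, hmT⟩ (Iio p)
  have hpA : p ∉ A := by simp [A, p, Fin.ext_iff]; omega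
  have hA : #A = t + 1 := by
    rw [card_insert_of_notMem (by simp [p, Fin.lt_def]; omega), Fin.card_Iio]
  set D : Equiv.Perm (Fin T) → Fin T → ℝ := fun σ j => ‖(X σ t - Y σ t)
    - η (t + 1) • (gradient (fun u => f u j) (X σ t) - gradient (fun u => f u j) (Y σ t))‖
  have hD : ∀ σ τ : Equiv.Perm (Fin T), (∀ a ∈ A, σ a = τ a) → D σ = D τ := fun σ τ h => by
    obtain ⟨hX, hY⟩ := gdIter_ordSeq_coupledSeq_congr (proj := proj) (f := f) (η := η)
      (w1 := w1) hmT i htT.le fun a ha => h a (by simp [A, p, Fin.ext_iff, Fin.lt_def]; omega)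
    simp only [D, X, Y, hX, hY]
  have hstep : ∀ σ, ‖X σ (t + 1) - Y σ (t + 1)‖ ≤ D σ (σ p) := fun σ => by
    have hz : ordSeq (Nat.zero_lt_of_lt hmT) σ (t + 1) = σ p :=
      ordSeq_of_le _ σ (by omega) (by omega)
    have := norm_gdIter_succ_sub_le_of_eq hnonexp (f := f) (η := η) (w1 := w1)
      (zs := ordSeq (Nat.zero_lt_of_lt hmT) σ) (zs' := coupledSeq hmT i σ) (k := t)
      (by simp [coupledSeq, hti])
    rwa [hz] at this
  have hcontr : ∀ σ : Equiv.Perm (Fin T),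
      ∑ j ∈ (A.image σ)ᶜ, D σ j ≤ #Aᶜ * ((1 - η (t + 1) * μ / 4) * ‖X σ t - Y σ t‖) := by
    intro σ
    have hcardσ : #(A.image σ) = #A := card_image_of_injective _ σ.injective
    have := sum_compl_norm_sub_smul_gradient_sub_le hdiff hsmooth hstrong hμ
      (gdIter_mem hproj hw1 _ t : X σ t ∈ W) (gdIter_mem hproj hw1 _ t : Y σ t ∈ W) (A.image σ)
      (by rw [hcardσ, hA]; exact_mod_cast hcard) hη hηβ hημ
    rwa [card_compl, hcardσ, ← card_compl] at this
  have hApos : (0 : ℝ) < #Aᶜ := by exact_mod_cast card_pos.2 ⟨p, mem_compl.2 hpA⟩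
  refine le_of_mul_le_mul_left ?_ hApos
  calc #Aᶜ * ∑ σ, ‖X σ (t + 1) - Y σ (t + 1)‖ ≤ #Aᶜ * ∑ σ, D σ (σ p) := by
        gcongr with σ; exact hstep σ
    _ = ∑ σ : Equiv.Perm (Fin T), ∑ j ∈ (A.image σ)ᶜ, D σ j := by
        rw [sum_perm_sum_compl_image A hpA D hD, nsmul_eq_mul]
    _ ≤ ∑ σ, #Aᶜ * ((1 - η (t + 1) * μ / 4) * ‖X σ t - Y σ t‖) := sum_le_sum fun σ _ => hcontr σ
    _ = #Aᶜ * ((1 - η (t + 1) * μ / 4) * ∑ σ, ‖X σ t - Y σ t‖) := by rw [← mul_sum, ← mul_sum]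

end RandomOrder

section StepSizes

lemma min_stepSize_mul_div_four {β μ : ℝ} (hμ : 0 < μ) (t : ℝ) :
    min (μ / (2 * β ^ 2)) (4 / (μ * t)) * μ / 4 = min (μ ^ 2 / (8 * β ^ 2)) (1 / t) := by
  rw [mul_div_assoc, min_mul_of_nonneg _ _ (by positivity)]
  congr 1 <;> field_simp; ring

lemma stepSize_bounds {β μ t η : ℝ} (hβ : β ≠ 0) (hμ : 0 < μ) (ht : 1 ≤ t)
    (hη : η = min (μ / (2 * β ^ 2)) (4 / (μ * t))) :
    0 ≤ η ∧ η * β ^ 2 ≤ μ / 2 ∧ η * μ ≤ 4 := by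
  subst hη
  refine ⟨by positivity, ?_, ?_⟩
  · calc _ ≤ μ / (2 * β ^ 2) * β ^ 2 := by gcongr; exact min_le_left _ _
      _ = μ / 2 := by field_simp
  · calc _ ≤ 4 / (μ * t) * μ := by gcongr; exact min_le_right _ _
      _ = 4 / t := by field_simp
      _ ≤ 4 := div_le_self (by norm_num) ht

lemma min_mul_one_sub_min_le {c t : ℝ} (hc : 0 ≤ c) (ht : 0 ≤ t) :
    min c (1 / t) * (1 - min c (1 / (t + 1))) ≤ min c (1 / (t + 1)) := by
  have ha : 0 ≤ min c (1 / t) := le_min hc (by positivity)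
  rcases le_total c (1 / (t + 1)) with h | h
  · rw [min_eq_left h]
    nlinarith [min_le_left c (1 / t)]
  · rw [min_eq_right h]
    have hat : min c (1 / t) * t ≤ 1 := by
      rcases ht.eq_or_lt with rfl | ht
      · simp
      · exact (le_div_iff₀ ht).1 (min_le_right _ _)
    calc min c (1 / t) * (1 - 1 / (t + 1)) = min c (1 / t) * t / (t + 1) := by
          field_simp; ring
      _ ≤ 1 / (t + 1) := by gcongr

lemma le_mul_of_le_one_sub_mul {D a : ℕ → ℝ} {C : ℝ} {i m : ℕ} (hC : 0 ≤ C)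
    (hbase : D i ≤ C * a i) (hstep : ∀ t, i ≤ t → t < m → D (t + 1) ≤ (1 - a (t + 1)) * D t)
    (ha : ∀ t, a (t + 1) ≤ 1) (hrec : ∀ t, i ≤ t → a t * (1 - a (t + 1)) ≤ a (t + 1)) :
    ∀ t, i ≤ t → t ≤ m → D t ≤ C * a t := by
  intro t hit
  induction t, hit using Nat.le_induction with
  | base => exact fun _ => hbase
  | succ t hit ih =>
    intro htm
    have h1 : 0 ≤ 1 - a (t + 1) := sub_nonneg.2 (ha t)
    calc D (t + 1) ≤ (1 - a (t + 1)) * D t := hstep t hit htm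
      _ ≤ (1 - a (t + 1)) * (C * a t) := by gcongr; exact ih (by omega)
      _ = C * (a t * (1 - a (t + 1))) := by ring
      _ ≤ C * a (t + 1) := by gcongr; exact hrec t hit

lemma pos_and_two_mul_mul_le_of_le_div {β μ M T : ℝ} (hμ : 0 < μ) (hM : 0 < M) (hT : 0 ≤ T)
    (h : M ≤ T / (2 * (β / μ))) : 0 < β ∧ 2 * M * β ≤ T * μ := by
  have hβ : 0 < β := by
    by_contra! hβ
    have : T / (2 * (β / μ)) ≤ 0 := div_nonpos_of_nonneg_of_nonpos hT
      (by nlinarith [div_nonpos_of_nonpos_of_nonneg hβ hμ.le])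
    linarith
  refine ⟨hβ, ?_⟩
  calc 2 * M * β = M * (2 * (β / μ)) * μ := by field_simp
    _ ≤ T * μ := by gcongr; exact (le_div_iff₀ (by positivity)).1 h

end StepSizes

lemma sum_norm_gdIter_coupledSeq_le {d T m : ℕ} {W : Set (EuclideanSpace ℝ (Fin d))}
    {proj : EuclideanSpace ℝ (Fin d) → EuclideanSpace ℝ (Fin d)}
    {f : EuclideanSpace ℝ (Fin d) → Fin T → ℝ} {η : ℕ → ℝ} {w1 : EuclideanSpace ℝ (Fin d)}
    {G β μ : ℝ} (hμ : 0 < μ) (hβ : 0 < β) (hG : 0 ≤ G)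
    (hproj : ∀ x, proj x ∈ W) (hnonexp : ∀ a b, ‖proj a - proj b‖ ≤ ‖a - b‖) (hw1 : w1 ∈ W)
    (hdiff : ∀ z, Differentiable ℝ (fun w => f w z))
    (hLip : ∀ z, ∀ w ∈ W, ‖gradient (fun u => f u z) w‖ ≤ G)
    (hsmooth : ∀ z, ∀ x ∈ W, ∀ y ∈ W,
      ‖gradient (fun u => f u z) x - gradient (fun u => f u z) y‖ ≤ β * ‖x - y‖)
    (hstrong : StrongConvexOnSet W μ (fun w => (1 / T : ℝ) * ∑ z : Fin T, f w z))
    (hη : ∀ t : ℕ, η t = min (μ / (2 * β ^ 2)) (4 / (μ * t)))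
    (hmT : m < T) {i : ℕ} (hi1 : 1 ≤ i) (him : i ≤ m) (hmβ : 2 * m * β ≤ T * μ) :
    ∑ σ : Equiv.Perm (Fin T), ‖gdIter proj f η (ordSeq (Nat.zero_lt_of_lt hmT) σ) w1 m
        - gdIter proj f η (coupledSeq hmT i σ) w1 m‖
      ≤ T.factorial * (8 * G / μ) * min (μ ^ 2 / (8 * β ^ 2)) (1 / (m : ℝ)) := by
  set a : ℕ → ℝ := fun t => min (μ ^ 2 / (8 * β ^ 2)) (1 / t)
  have ha : ∀ t, η t * μ / 4 = a t := fun t => by rw [hη]; exact min_stepSize_mul_div_four hμ t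
  have hηb := fun t (ht : 1 ≤ t) => stepSize_bounds hβ.ne' hμ (by exact_mod_cast ht) (hη t)
  set C : ℝ := T.factorial * (8 * G / μ) with hC
  set D : ℕ → ℝ := fun t => ∑ σ : Equiv.Perm (Fin T),
    ‖gdIter proj f η (ordSeq (Nat.zero_lt_of_lt hmT) σ) w1 t
      - gdIter proj f η (coupledSeq hmT i σ) w1 t‖
  have hbase : D i ≤ C * a i := by
    obtain ⟨k, rfl⟩ : ∃ k, i = k + 1 := ⟨i - 1, by omega⟩
    calc D (k + 1) ≤ ∑ _σ : Equiv.Perm (Fin T), 2 * G * η (k + 1) :=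
          sum_le_sum fun σ _ => norm_gdIter_succ_sub_le_of_eqOn hproj hnonexp hw1 hLip
            (hηb _ (by omega)).1 fun s _ hs => by simp [coupledSeq]; omega
      _ = C * a (k + 1) := by
          rw [sum_const, card_univ, Fintype.card_perm, Fintype.card_fin, nsmul_eq_mul, ← ha, hC]
          field_simp
          ring
  have hstep : ∀ t, i ≤ t → t < m → D (t + 1) ≤ (1 - a (t + 1)) * D t := fun t hit htm => by
    obtain ⟨h0, h1, h2⟩ := hηb (t + 1) (by omega)
    have hcard : ((t : ℝ) + 1) * β ≤ T * μ / 2 := by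
      have htm' : (t : ℝ) + 1 ≤ m := by exact_mod_cast htm
      nlinarith
    rw [← ha]
    exact sum_norm_gdIter_coupledSeq_succ_le hmT (by omega) htm hproj hnonexp hw1 hdiff hsmooth
      hstrong hμ.le hcard h0 h1 h2
  exact le_mul_of_le_one_sub_mul (by positivity) hbase hstep
    (fun t => (min_le_right _ _).trans (div_le_one_of_le₀ (by simp) (by positivity)))
    (fun t _ => by simpa [a] using min_mul_one_sub_min_le (by positivity) (Nat.cast_nonneg t))
    m him le_rfl

/-- (Corollary 3.6 of the paper.)  SGD without replacement with step
sizes `η_t = min{λ/(2β²), 4/(λ t)}` is on-average-oos stable with rate `8G/(λ m)` for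
all `m ≤ T/(2κ)`, `κ = β/λ`: the expected distance between the iterate `w_{m+1}` and the
coupled iterate `w^{(i)}_{m+1}` obtained by swapping `z_i` for `z_{m+1}` is at most
`8G/(λ m)`.  Datapoints are labelled by `Fin T` and the expectation is the average over
all permutations `σ`. -/
theorem sgd_without_replacement_stability
    {d : ℕ} (T : ℕ)
    (W : Set (EuclideanSpace ℝ (Fin d))) (hWconv : Convex ℝ W)
    (proj : EuclideanSpace ℝ (Fin d) → EuclideanSpace ℝ (Fin d))
    (hproj : ∀ x, proj x ∈ W ∧ ∀ w ∈ W, ‖x - proj x‖ ≤ ‖x - w‖)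
    (f : EuclideanSpace ℝ (Fin d) → Fin T → ℝ)
    (G β lam : ℝ) (hlam : 0 < lam)
    (hdiff : ∀ z, Differentiable ℝ (fun w => f w z))
    (hLip : ∀ z, ∀ w ∈ W, ‖gradient (fun u => f u z) w‖ ≤ G)
    (hsmooth : ∀ z, ∀ x ∈ W, ∀ y ∈ W,
      ‖gradient (fun u => f u z) x - gradient (fun u => f u z) y‖ ≤ β * ‖x - y‖)
    -- the average loss `F` is `λ`-strongly convex
    (hstrong : StrongConvexOnSet W lam (fun w => (1 / T : ℝ) * ∑ z : Fin T, f w z))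
    (η : ℕ → ℝ) (hη : ∀ t : ℕ, η t = min (lam / (2 * β ^ 2)) (4 / (lam * t)))
    (w1 : EuclideanSpace ℝ (Fin d)) (hw1 : w1 ∈ W)
    (m i : ℕ) (hi1 : 1 ≤ i) (him : i ≤ m) (hmT : m < T)
    -- `m ≤ T / (2κ)` with `κ = β/λ`
    (hm : (m : ℝ) ≤ (T : ℝ) / (2 * (β / lam))) :
    (∑ σ : Equiv.Perm (Fin T),
        ‖gdIter proj f η (ordSeq (by omega) σ) w1 m
          - gdIter proj f η
              (fun t => if t = i then σ ⟨m, hmT⟩ else ordSeq (by omega) σ t) w1 m‖)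
      / (Nat.factorial T : ℝ)
    ≤ 8 * G / (lam * m) := by
  have hm0 : (0 : ℝ) < m := by exact_mod_cast (by omega : 0 < m)
  obtain ⟨hβ, hmβ⟩ := pos_and_two_mul_mul_le_of_le_div hlam hm0 (Nat.cast_nonneg T) hm
  have hG : 0 ≤ G := (norm_nonneg _).trans (hLip ⟨0, by omega⟩ w1 hw1)
  have hbound := sum_norm_gdIter_coupledSeq_le hlam hβ hG (fun x => (hproj x).1)
    (norm_proj_sub_proj_le hWconv hproj) hw1 hdiff hLip hsmooth hstrong hη hmT hi1 him hmβ
  rw [div_le_iff₀ (by positivity)]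
  calc _ ≤ T.factorial * (8 * G / lam) * min (lam ^ 2 / (8 * β ^ 2)) (1 / (m : ℝ)) := hbound
    _ ≤ T.factorial * (8 * G / lam) * (1 / m) := by gcongr; exact min_le_right _ _
    _ = 8 * G / (lam * m) * T.factorial := by field_simp
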